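/- arXiv:cond-mat/9702121 — 2 statements merged into one kernel-verified Lean document; each statement's English description precedes it below -/
import Mathlib

section
/- For any integer k, the k-th Fourier coefficient U_k(ρ) = (1/2π)∫_0^{2π} U(ρ_x + R cos φ, ρ_y + R sin φ) e^{-ikφ} dφ of the chessboard potential U(x,y) = -W(cos(x/d)+cos(y/d)) equals -W·J_k(R/d)·(i^k cos(ρ_x/d) + cos(ρ_y/d)) when k is even, and -W·J_k(R/d)·i·(i^k sin(ρ_x/d) + sin(ρ_y/d)) when k is odd, where J_k is the Bessel function of the first kind of order k. -/
open Real Complex intervalIntegral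

/-- Bessel function of the first kind of integer order `k`,
`J_k z = (1/2π) ∫_0^{2π} e^{i (z sin φ - k φ)} dφ`. -/
noncomputable def besselJint (k : ℤ) (z : ℝ) : ℂ :=
  (1 / (2 * π)) * ∫ φ in (0:ℝ)..(2 * π),
    Complex.exp (Complex.I * ((z : ℂ) * Real.sin φ - (k : ℂ) * (φ : ℂ)))

private lemma cos_exp (z : ℂ) :
    Complex.cos z = (Complex.exp (z * Complex.I) + Complex.exp (-z * Complex.I)) / 2 := rfl

private lemma cosr (x : ℝ) : ((Real.cos x : ℝ) : ℂ)
    = (Complex.exp (Complex.I * (x:ℂ)) + Complex.exp (-(Complex.I * (x:ℂ)))) / 2 := by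
  rw [Complex.ofReal_cos, cos_exp]
  ring_nf

private lemma sinr (x : ℝ) : ((Real.sin x : ℝ) : ℂ)
    = (Complex.exp (Complex.I * (x:ℂ)) - Complex.exp (-(Complex.I * (x:ℂ)))) / (2 * Complex.I) := by
  rw [Complex.ofReal_sin]
  show (Complex.exp (-(x:ℂ) * Complex.I) - Complex.exp ((x:ℂ) * Complex.I)) * Complex.I / 2 = _
  rw [eq_div_iff (by simp [Complex.I_ne_zero] : (2:ℂ) * Complex.I ≠ 0)]
  ring_nf
  rw [Complex.I_sq]
  ring_nf

set_option maxHeartbeats 1000000 in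
private lemma shift_int (k : ℤ) (r s : ℝ) :
    (∫ φ in (0:ℝ)..(2*π), Complex.exp (Complex.I * ((r:ℂ) * Real.sin (φ + s) - (k:ℂ) * (φ:ℂ))))
      = Complex.exp (Complex.I * (k:ℂ) * (s:ℂ)) *
        ∫ φ in (0:ℝ)..(2*π), Complex.exp (Complex.I * ((r:ℂ) * Real.sin φ - (k:ℂ) * (φ:ℂ))) := by
  set g : ℝ → ℂ := fun φ => Complex.exp (Complex.I * ((r:ℂ) * Real.sin φ - (k:ℂ) * (φ:ℂ))) with hg
  have hper : Function.Periodic g (2*π) := by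
    intro x
    simp only [hg]
    rw [Real.sin_add_two_pi]
    rw [show Complex.I * ((r:ℂ) * Real.sin x - (k:ℂ) * ((x + 2*π : ℝ):ℂ))
        = Complex.I * ((r:ℂ) * Real.sin x - (k:ℂ) * (x:ℂ)) + ((-k : ℤ):ℂ) * (2*π*Complex.I) by
      push_cast; ring]
    rw [Complex.exp_add, Complex.exp_int_mul_two_pi_mul_I, mul_one]
  have key : ∀ φ : ℝ, Complex.exp (Complex.I * ((r:ℂ) * Real.sin (φ + s) - (k:ℂ) * (φ:ℂ)))
      = Complex.exp (Complex.I * (k:ℂ) * (s:ℂ)) * g (φ + s) := by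
    intro φ
    simp only [hg]
    rw [← Complex.exp_add]
    congr 1
    push_cast
    ring
  simp_rw [key]
  rw [intervalIntegral.integral_const_mul]
  congr 1
  rw [intervalIntegral.integral_comp_add_right g s]
  calc (∫ x in (0:ℝ)+s..2*π+s, g x) = ∫ x in s..s+2*π, g x := by rw [zero_add, add_comm]
    _ = ∫ x in (0:ℝ)..0+2*π, g x := hper.intervalIntegral_add_eq s 0
    _ = _ := by rw [zero_add]

set_option maxHeartbeats 1600000 in
/-- Fourier coefficients of the chessboard potential averaged over the cyclotron circle. -/
theorem chessboard_fourier_coefficients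
    (W d R : ℝ) (hW : 0 < W) (hd : 0 < d) (hR : 0 < R)
    (U : ℝ → ℝ → ℝ)
    (hU : ∀ x y, U x y = -W * (Real.cos (x / d) + Real.cos (y / d)))
    (ρx ρy : ℝ) (k : ℤ) :
    (1 / (2 * π) : ℂ) *
        ∫ φ in (0:ℝ)..(2 * π),
          (U (ρx + R * Real.cos φ) (ρy + R * Real.sin φ) : ℂ) *
            Complex.exp (-Complex.I * (k : ℂ) * (φ : ℂ))
      = if Even k then
          -(W : ℂ) * besselJint k (R / d) *
            (Complex.I ^ k * Real.cos (ρx / d) + Real.cos (ρy / d))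
        else
          -(W : ℂ) * besselJint k (R / d) * Complex.I *
            (Complex.I ^ k * Real.sin (ρx / d) + Real.sin (ρy / d)) := by
  have hpt : ∀ φ : ℝ,
      ((U (ρx + R * Real.cos φ) (ρy + R * Real.sin φ) : ℝ) : ℂ) *
          Complex.exp (-Complex.I * (k:ℂ) * (φ:ℂ))
      = (-(W:ℂ)/2 * Complex.exp (Complex.I * ((ρx/d : ℝ):ℂ))) *
            Complex.exp (Complex.I * (((R/d : ℝ):ℂ) * Real.sin (φ + π/2) - (k:ℂ) * (φ:ℂ)))
        + ((-(W:ℂ)/2 * Complex.exp (-(Complex.I * ((ρx/d : ℝ):ℂ)))) *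
            Complex.exp (Complex.I * (((R/d : ℝ):ℂ) * Real.sin (φ + -(π/2)) - (k:ℂ) * (φ:ℂ)))
        + ((-(W:ℂ)/2 * Complex.exp (Complex.I * ((ρy/d : ℝ):ℂ))) *
            Complex.exp (Complex.I * (((R/d : ℝ):ℂ) * Real.sin (φ + 0) - (k:ℂ) * (φ:ℂ)))
        + (-(W:ℂ)/2 * Complex.exp (-(Complex.I * ((ρy/d : ℝ):ℂ)))) *
            Complex.exp (Complex.I * (((R/d : ℝ):ℂ) * Real.sin (φ + π) - (k:ℂ) * (φ:ℂ))))) := by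
    intro φ
    rw [hU]
    rw [show Real.sin (φ + -(π/2)) = -Real.cos φ by rw [← sub_eq_add_neg, Real.sin_sub_pi_div_two]]
    rw [Real.sin_add_pi_div_two, Real.sin_add_pi, add_zero]
    push_cast
    rw [cos_exp (((ρx:ℂ) + (R:ℂ) * Complex.cos (φ:ℂ)) / (d:ℂ)),
        cos_exp (((ρy:ℂ) + (R:ℂ) * Complex.sin (φ:ℂ)) / (d:ℂ))]
    linear_combination (norm := ring_nf)
      ((W:ℂ)/2) * (Complex.exp_add (((ρx:ℂ) + (R:ℂ) * Complex.cos (φ:ℂ)) / (d:ℂ) * Complex.I)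
          (-Complex.I * (k:ℂ) * (φ:ℂ))
        - Complex.exp_add (Complex.I * ((ρx:ℂ)/(d:ℂ)))
          (Complex.I * ((R:ℂ)/(d:ℂ) * Complex.cos (φ:ℂ) - (k:ℂ) * (φ:ℂ))))
      + ((W:ℂ)/2) * (Complex.exp_add (-(((ρx:ℂ) + (R:ℂ) * Complex.cos (φ:ℂ)) / (d:ℂ)) * Complex.I)
          (-Complex.I * (k:ℂ) * (φ:ℂ))
        - Complex.exp_add (-(Complex.I * ((ρx:ℂ)/(d:ℂ))))
          (Complex.I * ((R:ℂ)/(d:ℂ) * -Complex.cos (φ:ℂ) - (k:ℂ) * (φ:ℂ))))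
      + ((W:ℂ)/2) * (Complex.exp_add (((ρy:ℂ) + (R:ℂ) * Complex.sin (φ:ℂ)) / (d:ℂ) * Complex.I)
          (-Complex.I * (k:ℂ) * (φ:ℂ))
        - Complex.exp_add (Complex.I * ((ρy:ℂ)/(d:ℂ)))
          (Complex.I * ((R:ℂ)/(d:ℂ) * Complex.sin (φ:ℂ) - (k:ℂ) * (φ:ℂ))))
      + ((W:ℂ)/2) * (Complex.exp_add (-(((ρy:ℂ) + (R:ℂ) * Complex.sin (φ:ℂ)) / (d:ℂ)) * Complex.I)
          (-Complex.I * (k:ℂ) * (φ:ℂ))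
        - Complex.exp_add (-(Complex.I * ((ρy:ℂ)/(d:ℂ))))
          (Complex.I * ((R:ℂ)/(d:ℂ) * -Complex.sin (φ:ℂ) - (k:ℂ) * (φ:ℂ))))
  have hint : ∀ s : ℝ, IntervalIntegrable
      (fun φ : ℝ => Complex.exp (Complex.I * (((R/d : ℝ):ℂ) * Real.sin (φ + s) - (k:ℂ) * (φ:ℂ))))
      MeasureTheory.volume 0 (2*π) := by
    intro s
    apply Continuous.intervalIntegrable
    fun_prop
  simp only [hpt]
  rw [intervalIntegral.integral_add (((hint (π/2)).const_mul _))
        (((hint (-(π/2))).const_mul _).add (((hint 0).const_mul _).add ((hint π).const_mul _))),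
      intervalIntegral.integral_add ((hint (-(π/2))).const_mul _)
        (((hint 0).const_mul _).add ((hint π).const_mul _)),
      intervalIntegral.integral_add ((hint 0).const_mul _) ((hint π).const_mul _)]
  rw [intervalIntegral.integral_const_mul, intervalIntegral.integral_const_mul,
      intervalIntegral.integral_const_mul, intervalIntegral.integral_const_mul]
  rw [shift_int k (R/d) (π/2), shift_int k (R/d) (-(π/2)), shift_int k (R/d) 0,
      shift_int k (R/d) π]
  have hv1 : Complex.exp (Complex.I * (k:ℂ) * ((π/2 : ℝ):ℂ)) = Complex.I ^ k := by
    rw [show Complex.I * (k:ℂ) * ((π/2 : ℝ):ℂ) = (k:ℂ) * (((π/2 : ℝ):ℂ) * Complex.I) by ring,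
        Complex.exp_int_mul]
    congr 1
    rw [Complex.exp_mul_I, ← Complex.ofReal_cos, ← Complex.ofReal_sin]
    simp
  have hv2 : Complex.exp (Complex.I * (k:ℂ) * ((-(π/2) : ℝ):ℂ)) = (-Complex.I) ^ k := by
    rw [show Complex.I * (k:ℂ) * ((-(π/2) : ℝ):ℂ) = (k:ℂ) * (((-(π/2) : ℝ):ℂ) * Complex.I) by ring,
        Complex.exp_int_mul]
    congr 1
    rw [Complex.exp_mul_I, ← Complex.ofReal_cos, ← Complex.ofReal_sin]
    simp
  have hv3 : Complex.exp (Complex.I * (k:ℂ) * ((0 : ℝ):ℂ)) = 1 := by simp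
  have hv4 : Complex.exp (Complex.I * (k:ℂ) * ((π : ℝ):ℂ)) = (-1 : ℂ) ^ k := by
    rw [show Complex.I * (k:ℂ) * ((π : ℝ):ℂ) = (k:ℂ) * (((π : ℝ):ℂ) * Complex.I) by ring,
        Complex.exp_int_mul, Complex.exp_pi_mul_I]
  rw [hv1, hv2, hv3, hv4]
  rcases Int.even_or_odd k with he | ho
  · rw [if_pos he, he.neg_zpow, he.neg_one_zpow]
    simp only [besselJint]
    rw [cosr (ρx/d), cosr (ρy/d)]
    ring
  · rw [if_neg (Int.not_even_iff_odd.mpr ho), ho.neg_zpow, ho.neg_one_zpow]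
    simp only [besselJint]
    rw [sinr (ρx/d), sinr (ρy/d)]
    have hπ : ((π:ℝ):ℂ) ≠ 0 := Complex.ofReal_ne_zero.mpr Real.pi_ne_zero
    field_simp [Complex.I_ne_zero]
    ring
end

section
/- Majorant Lemma: let v be analytic in a neighborhood of a real point r, and let u(s) = Σ_{n≥0} (|v^{(n)}(r)|/n!)(s-r)^n be its majorant. Consider solutions of ds/dt = v(s), s(t_0) = r and ds/dt = u(s), s(t_0) = r, and let t_v (resp. t_u) be the radius of convergence of the Taylor series in t of v(s(t)) (resp. u(s(t))) about t_0. Then t_v ≥ t_u. -/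
/-!
Call `u` a majorant of `v` at `z` when every derivative `u⁽ᵏ⁾(z)` is a nonnegative real
number bounding `‖v⁽ᵏ⁾(z)‖`. Differentiation preserves majorants, and so do products, since
the Leibniz formula has nonnegative integer coefficients. Hence `(u d/ds)ⁿ u` majorizes
`(v d/ds)ⁿ v`, and at order zero this bounds the Taylor coefficients of `v(s(t))` by those of
`u(s(t))`, which gives the comparison of radii.
-/

open Complex Finset

open scoped ComplexOrder

namespace Complex

theorem ofReal_norm_mul_le_mul {a b c d : ℂ} (hab : (‖a‖ : ℂ) ≤ b) (hcd : (‖c‖ : ℂ) ≤ d) :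
    (‖a * c‖ : ℂ) ≤ b * d := by
  rw [norm_mul, ofReal_mul]
  exact mul_le_mul hab hcd (by simp) ((zero_le_real.2 (norm_nonneg a)).trans hab)

theorem ofReal_norm_sum_le_sum {ι : Type*} (s : Finset ι) {f g : ι → ℂ}
    (h : ∀ i ∈ s, (‖f i‖ : ℂ) ≤ g i) : (‖∑ i ∈ s, f i‖ : ℂ) ≤ ∑ i ∈ s, g i :=
  calc (‖∑ i ∈ s, f i‖ : ℂ) ≤ ∑ i ∈ s, (‖f i‖ : ℂ) := by
        rw [← ofReal_sum]; exact real_le_real.2 (norm_sum_le s f)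
    _ ≤ ∑ i ∈ s, g i := sum_le_sum h

end Complex

/-- In the partial order of `ℂ`, `(‖a‖ : ℂ) ≤ b` means that `b` is a real number `≥ ‖a‖`. -/
def IsMajorantAt (u v : ℂ → ℂ) (z : ℂ) : Prop :=
  ∀ k, (‖iteratedDeriv k v z‖ : ℂ) ≤ iteratedDeriv k u z

namespace IsMajorantAt

variable {u v f g : ℂ → ℂ} {z : ℂ}

theorem deriv (h : IsMajorantAt u v z) : IsMajorantAt (deriv u) (deriv v) z := fun k => by
  simpa only [← iteratedDeriv_succ'] using h (k + 1)

theorem mul (hu : AnalyticAt ℂ u z) (hv : AnalyticAt ℂ v z) (hf : AnalyticAt ℂ f z)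
    (hg : AnalyticAt ℂ g z) (huv : IsMajorantAt u v z) (hfg : IsMajorantAt f g z) :
    IsMajorantAt (u * f) (v * g) z := fun k => by
  rw [iteratedDeriv_mul hv.contDiffAt hg.contDiffAt, iteratedDeriv_mul hu.contDiffAt hf.contDiffAt]
  refine ofReal_norm_sum_le_sum _ fun i _ => ?_
  rw [mul_assoc, mul_assoc]
  exact ofReal_norm_mul_le_mul (by simp) (ofReal_norm_mul_le_mul (huv i) (hfg (k - i)))

theorem norm_apply_le (h : IsMajorantAt u v z) : ‖v z‖ ≤ ‖u z‖ := by
  have h0 := le_def.1 (h 0)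
  simp only [iteratedDeriv_zero, ofReal_re] at h0
  exact h0.1.trans (re_le_norm _)

end IsMajorantAt

/-- The derivation `v d/ds`: along a solution of `ds/dt = v(s)` it computes `d/dt (f ∘ s)`. -/
noncomputable def derivAlong (v f : ℂ → ℂ) : ℂ → ℂ := fun s => v s * deriv f s

theorem AnalyticAt.iterate_derivAlong {v f : ℂ → ℂ} {z : ℂ} (hv : AnalyticAt ℂ v z)
    (hf : AnalyticAt ℂ f z) (n : ℕ) : AnalyticAt ℂ ((derivAlong v)^[n] f) z := by
  induction n with
  | zero => exact hf
  | succ n ih =>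
    rw [Function.iterate_succ_apply']
    exact hv.mul ih.deriv

theorem IsMajorantAt.iterate_derivAlong {u v f g : ℂ → ℂ} {z : ℂ}
    (hu : AnalyticAt ℂ u z) (hv : AnalyticAt ℂ v z) (hf : AnalyticAt ℂ f z)
    (hg : AnalyticAt ℂ g z) (huv : IsMajorantAt u v z) (hfg : IsMajorantAt f g z) (n : ℕ) :
    IsMajorantAt ((derivAlong u)^[n] f) ((derivAlong v)^[n] g) z := by
  induction n with
  | zero => exact hfg
  | succ n ih =>
    rw [Function.iterate_succ_apply', Function.iterate_succ_apply']
    exact huv.mul hu hv (hu.iterate_derivAlong hf n).deriv (hv.iterate_derivAlong hg n).deriv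
      ih.deriv

theorem majorant_lemma_general
    (v u : ℂ → ℂ) (r : ℝ)
    (hv : AnalyticAt ℂ v (r : ℂ))
    (hu : AnalyticAt ℂ u (r : ℂ))
    (hmaj : ∀ n : ℕ, iteratedDeriv n u (r : ℂ) = (‖iteratedDeriv n v (r : ℂ)‖ : ℂ))
    (pv pu : FormalMultilinearSeries ℂ ℂ ℂ)
    (hpv : ∀ n : ℕ, pv n = ContinuousMultilinearMap.mkPiRing ℂ (Fin n)
      (((fun f : ℂ → ℂ => fun s => v s * deriv f s)^[n] v) (r : ℂ) / (n.factorial : ℂ)))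
    (hpu : ∀ n : ℕ, pu n = ContinuousMultilinearMap.mkPiRing ℂ (Fin n)
      (((fun f : ℂ → ℂ => fun s => u s * deriv f s)^[n] u) (r : ℂ) / (n.factorial : ℂ))) :
    pu.radius ≤ pv.radius := by
  have huv : IsMajorantAt u v r := fun k => (hmaj k).ge
  refine FormalMultilinearSeries.radius_le_of_le fun n => ?_
  have hn := huv.iterate_derivAlong hu hv hu hv huv n
  rw [hpv, hpu, ContinuousMultilinearMap.norm_mkPiRing, ContinuousMultilinearMap.norm_mkPiRing,
    norm_div, norm_div]
  gcongr
  exact hn.norm_apply_le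

/-- Majorant Lemma: if `u` is the majorant of the analytic function `v` at the real
point `r` (i.e. `u⁽ⁿ⁾(r) = |v⁽ⁿ⁾(r)|`), then the radius of convergence `t_v` of the
Taylor series in `t` of `v(s(t))` (whose coefficients are `(v d/ds)ⁿ v (r) / n!`,
obtained by iterating the derivation `v·d/ds` along `ds/dt = v(s)`, `s(t₀) = r`)
is at least the corresponding radius `t_u` for `u`. -/
theorem majorant_lemma
    (v u : ℂ → ℂ) (r : ℝ)
    (hv : AnalyticAt ℂ v (r : ℂ)) (hvr : v (r : ℂ) ≠ 0)
    (hu : AnalyticAt ℂ u (r : ℂ))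
    (hmaj : ∀ n : ℕ, iteratedDeriv n u (r : ℂ) = (‖iteratedDeriv n v (r : ℂ)‖ : ℂ))
    (pv pu : FormalMultilinearSeries ℂ ℂ ℂ)
    (hpv : ∀ n : ℕ, pv n = ContinuousMultilinearMap.mkPiRing ℂ (Fin n)
      (((fun f : ℂ → ℂ => fun s => v s * deriv f s)^[n] v) (r : ℂ) / (n.factorial : ℂ)))
    (hpu : ∀ n : ℕ, pu n = ContinuousMultilinearMap.mkPiRing ℂ (Fin n)
      (((fun f : ℂ → ℂ => fun s => u s * deriv f s)^[n] u) (r : ℂ) / (n.factorial : ℂ))) :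
    pu.radius ≤ pv.radius :=
  majorant_lemma_general v u r hv hu hmaj pv pu hpv hpu
end
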